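/- Let ρ be a strictly positive probability distribution on V, let E : V → ℝ satisfy E(v) ≠ 0 for all v, and let α ∈ ℝ. Define φ(v) = |E(v)|^α · ρ(v) / Σ_{w∈V} |E(w)|^α · ρ(w) and κ(v) = ρ(v)/φ(v). Then Var_ρ(E) − Var_φ(E·κ) = Cov_ρ(|E|^{2−α}, |E|^α), i.e., the difference of variances equals ⟨E²⟩_ρ − ⟨|E|^{2−α}⟩_ρ · ⟨|E|^α⟩_ρ. -/

import Mathlib

/-!
Reweighting `E` by `κ = ρ/φ` does not change its mean, `⟨E κ⟩_φ = ⟨E⟩_ρ`, so the two variances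
differ only in their second moments, and `⟨(E κ)²⟩_φ = ⟨E² κ⟩_ρ`. For the escort distribution
`φ ∝ |E|^α ρ` the weight is `κ = ⟨|E|^α⟩_ρ / |E|^α`, whence `⟨E² κ⟩_ρ = ⟨|E|^α⟩_ρ ⟨|E|^{2-α}⟩_ρ`.
-/

/-- Expectation of `X` under the distribution `p` on a finite set. -/
noncomputable def expec {V : Type*} [Fintype V] (p X : V → ℝ) : ℝ := ∑ v, p v * X v

/-- Variance of `X` under the distribution `p` on a finite set. -/
noncomputable def vari {V : Type*} [Fintype V] (p X : V → ℝ) : ℝ :=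
  expec p (fun v => X v ^ 2) - (expec p X) ^ 2

section Reweighting

variable {V : Type*} [Fintype V]

lemma expec_const_mul (p X : V → ℝ) (c : ℝ) :
    expec p (fun v => c * X v) = c * expec p X := by
  simp only [expec, Finset.mul_sum]
  exact Finset.sum_congr rfl fun v _ => by ring

lemma expec_mul_div_eq (ρ φ X : V → ℝ) (hac : ∀ v, φ v = 0 → ρ v = 0) :
    expec φ (fun v => X v * (ρ v / φ v)) = expec ρ X := by
  refine Finset.sum_congr rfl fun v _ => ?_
  by_cases hφ : φ v = 0
  · simp [hφ, hac v hφ]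
  · field_simp

lemma expec_sq_mul_div_eq (ρ φ X : V → ℝ) :
    expec φ (fun v => (X v * (ρ v / φ v)) ^ 2) = expec ρ (fun v => X v ^ 2 * (ρ v / φ v)) := by
  refine Finset.sum_congr rfl fun v _ => ?_
  by_cases hφ : φ v = 0
  · simp [hφ]
  · field_simp

lemma vari_sub_vari_mul_div (ρ φ X : V → ℝ) (hac : ∀ v, φ v = 0 → ρ v = 0) :
    vari ρ X - vari φ (fun v => X v * (ρ v / φ v))
      = expec ρ (fun v => X v ^ 2) - expec ρ (fun v => X v ^ 2 * (ρ v / φ v)) := by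
  rw [vari, vari, expec_mul_div_eq ρ φ X hac, expec_sq_mul_div_eq]
  ring

end Reweighting

lemma sq_div_abs_rpow {x : ℝ} (hx : x ≠ 0) (α : ℝ) : x ^ 2 / |x| ^ α = |x| ^ ((2 : ℝ) - α) := by
  rw [Real.rpow_sub (abs_pos.2 hx), Real.rpow_two, sq_abs]

theorem variance_difference_is_covariance_general {V : Type*} [Fintype V]
    (ρ : V → ℝ)
    (hρ0 : ∀ v, 0 < ρ v)
    (E : V → ℝ) (hE : ∀ v, E v ≠ 0) (α : ℝ)
    (φ : V → ℝ)
    (hφdef : ∀ v, φ v = |E v| ^ α * ρ v / ∑ w, |E w| ^ α * ρ w) :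
    vari ρ E - vari φ (fun v => E v * (ρ v / φ v))
      = expec ρ (fun v => E v ^ 2)
        - expec ρ (fun v => |E v| ^ ((2 : ℝ) - α)) * expec ρ (fun v => |E v| ^ α) := by
  set S := ∑ w, |E w| ^ α * ρ w
  have hweight : ∀ v, 0 < |E v| ^ α * ρ v := fun v =>
    mul_pos (Real.rpow_pos_of_pos (abs_pos.2 (hE v)) α) (hρ0 v)
  have hφ : ∀ v, φ v ≠ 0 := fun v => by
    have hSpos : 0 < S := Finset.sum_pos (fun w _ => hweight w) ⟨v, Finset.mem_univ v⟩
    rw [hφdef v]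
    exact (div_pos (hweight v) hSpos).ne'
  have hκ : ∀ v, E v ^ 2 * (ρ v / φ v) = S * |E v| ^ ((2 : ℝ) - α) := fun v => by
    have hρφ : ρ v / φ v = S / |E v| ^ α := by
      rw [hφdef v, div_div_eq_mul_div, mul_comm (ρ v), mul_div_mul_right _ _ (hρ0 v).ne']
    rw [hρφ, ← sq_div_abs_rpow (hE v)]
    ring
  have hS : S = expec ρ (fun v => |E v| ^ α) := Finset.sum_congr rfl fun v _ => mul_comm _ _
  rw [vari_sub_vari_mul_div ρ φ E fun v h => absurd h (hφ v), funext hκ, expec_const_mul, hS]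
  ring

/-- with `φ(v) = |E(v)|^α ρ(v) / ∑_w |E(w)|^α ρ(w)` and
`κ = ρ/φ`, the difference of variances equals the covariance
`Cov_ρ(|E|^{2−α}, |E|^α) = ⟨E²⟩_ρ − ⟨|E|^{2−α}⟩_ρ ⟨|E|^α⟩_ρ`. -/
theorem variance_difference_is_covariance {V : Type*} [Fintype V]
    (ρ : V → ℝ)
    (hρ0 : ∀ v, 0 < ρ v) (hρ1 : ∀ v, ρ v ≤ 1) (hρsum : ∑ v, ρ v = 1)
    (E : V → ℝ) (hE : ∀ v, E v ≠ 0) (α : ℝ)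
    (φ : V → ℝ)
    (hφdef : ∀ v, φ v = |E v| ^ α * ρ v / ∑ w, |E w| ^ α * ρ w) :
    vari ρ E - vari φ (fun v => E v * (ρ v / φ v))
      = expec ρ (fun v => E v ^ 2)
        - expec ρ (fun v => |E v| ^ ((2 : ℝ) - α)) * expec ρ (fun v => |E v| ^ α) :=
  variance_difference_is_covariance_general ρ hρ0 E hE α φ hφdef
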